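/- For all positive integers n and r, c*(n,r) = Σ_{d | n, d | r, gcd(d, r/d) = 1} d · (−1)^{ω(r/d)}, the sum being over the unitary divisors d of r that divide n, where ω(m) denotes the number of distinct prime divisors of m. In particular, c*(n,r) is an integer. -/

import Mathlib

open Finset

/-- The unitary gcd `(n,r)_U`: the largest `d` with `d ∣ n`, `d ∣ r` and `gcd(d, r/d) = 1`. -/
def unitaryGcd (n r : ℕ) : ℕ :=
  (r.divisors.filter (fun d => d ∣ n ∧ Nat.Coprime d (r / d))).sup id

/-- The unitary Ramanujan sum `c*(n,r) = ∑_{1 ≤ k ≤ r, (k,r)_U = 1} exp(2πikn/r)`. -/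
noncomputable def unitaryRamanujanSum (n r : ℕ) : ℂ :=
  ∑ k ∈ (Finset.Icc 1 r).filter (fun k => unitaryGcd k r = 1),
    Complex.exp (2 * Real.pi * Complex.I * k * n / r)

/-!
Möbius inversion over unitary divisors. A unitary divisor `d` of `r` contains the full power
`p ^ v_p(r)` of each of its primes, so `d ↦ d.primeFactors` identifies the unitary divisors of `r`
dividing `k` with the subsets of `T = {p ∣ r | p ^ v_p(r) ∣ k}`. Hence the sum of `(-1)^ω(d)`
over these `d` is `1` if `T = ∅`, i.e. if `(k, r)_U = 1`, and `0` otherwise.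
Inserting this indicator into `c*(n, r)` and exchanging the sums leaves the geometric sums
`∑_{1 ≤ k ≤ r, d ∣ k} e(kn/r) = (r/d)·[r/d ∣ n]`; the involution `d ↦ r/d` of the unitary
divisors of `r` gives the formula.
-/

lemma sum_Icc_pow_eq_zero {R : Type*} [Ring R] [NoZeroDivisors R] {x : R} {m : ℕ}
    (hx1 : x ≠ 1) (hx : x ^ m = 1) : ∑ j ∈ Icc 1 m, x ^ j = 0 := by
  have hgeom : ∑ j ∈ range m, x ^ j = 0 := by
    have h := geom_sum_mul x m
    rw [hx, sub_self] at h
    exact (mul_eq_zero.1 h).resolve_right (sub_ne_zero.2 hx1)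
  rw [← Ico_add_one_right_eq_Icc, sum_Ico_eq_sum_range]
  simp [pow_add, ← mul_sum, hgeom]

open Complex in
lemma sum_Icc_exp_eq_ite (m n : ℕ) :
    ∑ j ∈ Icc 1 m, exp (2 * Real.pi * I * j * n / m) = if m ∣ n then (m : ℂ) else 0 := by
  rcases eq_or_ne m 0 with rfl | hm
  · simp
  set ω := exp (2 * Real.pi * I / m)
  have hω : IsPrimitiveRoot ω m := isPrimitiveRoot_exp m hm
  have hterm (j : ℕ) : exp (2 * Real.pi * I * j * n / m) = (ω ^ n) ^ j := by
    rw [← pow_mul, ← exp_nat_mul]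
    push_cast
    ring_nf
  simp only [hterm]
  split_ifs with h
  · simp [(hω.pow_eq_one_iff_dvd n).2 h]
  · exact sum_Icc_pow_eq_zero (mt (hω.pow_eq_one_iff_dvd n).1 h)
      (by rw [← pow_mul, mul_comm, pow_mul, hω.pow_eq_one, one_pow])

lemma sum_filter_dvd_Icc {M : Type*} [AddCommMonoid M] (f : ℕ → M) {d m : ℕ} (hd : 0 < d) :
    ∑ k ∈ Icc 1 (d * m) with d ∣ k, f k = ∑ j ∈ Icc 1 m, f (d * j) := by
  rw [← sum_image fun _ _ _ _ h => Nat.eq_of_mul_eq_mul_left hd h]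
  congr 1
  ext k
  simp only [mem_filter, mem_Icc, mem_image]
  constructor
  · rintro ⟨⟨hk1, hk⟩, j, rfl⟩
    exact ⟨j, ⟨Nat.pos_of_mul_pos_left hk1, Nat.le_of_mul_le_mul_left hk hd⟩, rfl⟩
  · rintro ⟨j, ⟨hj1, hjm⟩, rfl⟩
    exact ⟨⟨Nat.mul_pos hd hj1, Nat.mul_le_mul_left d hjm⟩, dvd_mul_right d j⟩

open Complex in
lemma sum_filter_dvd_Icc_exp (n : ℕ) {d r : ℕ} (hd : d ∣ r) (hr : r ≠ 0) :
    ∑ k ∈ Icc 1 r with d ∣ k, exp (2 * Real.pi * I * k * n / r)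
      = if r / d ∣ n then ((r / d : ℕ) : ℂ) else 0 := by
  obtain ⟨m, rfl⟩ := hd
  have hd0 : d ≠ 0 := left_ne_zero_of_mul hr
  rw [sum_filter_dvd_Icc _ (pos_of_ne_zero hd0), Nat.mul_div_cancel_left m (pos_of_ne_zero hd0),
    ← sum_Icc_exp_eq_ite]
  have hd0' : (d : ℂ) ≠ 0 := Nat.cast_ne_zero.2 hd0
  refine sum_congr rfl fun j _ => ?_
  congr 1
  push_cast
  field_simp

namespace Nat

def unitaryDivisors (r : ℕ) : Finset ℕ := {d ∈ r.divisors | d.Coprime (r / d)}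

variable {d k r : ℕ}

lemma mem_unitaryDivisors : d ∈ r.unitaryDivisors ↔ (d ∣ r ∧ r ≠ 0) ∧ d.Coprime (r / d) := by
  rw [unitaryDivisors, mem_filter, mem_divisors]

lemma pos_of_mem_unitaryDivisors (hd : d ∈ r.unitaryDivisors) : 0 < d :=
  pos_of_mem_divisors (mem_filter.1 hd).1

lemma filter_dvd_unitaryDivisors (k r : ℕ) :
    {d ∈ r.unitaryDivisors | d ∣ k} = {d ∈ r.divisors | d ∣ k ∧ d.Coprime (r / d)} := by
  rw [unitaryDivisors, filter_filter]
  simp only [and_comm]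

lemma div_mem_unitaryDivisors (hd : d ∈ r.unitaryDivisors) : r / d ∈ r.unitaryDivisors := by
  obtain ⟨⟨hdr, hr⟩, hcop⟩ := mem_unitaryDivisors.1 hd
  refine mem_unitaryDivisors.2 ⟨⟨div_dvd_of_dvd hdr, hr⟩, ?_⟩
  rwa [Nat.div_div_self hdr hr, coprime_comm]

lemma sum_unitaryDivisors_div_comm {M : Type*} [AddCommMonoid M] (f : ℕ → ℕ → M) :
    ∑ d ∈ r.unitaryDivisors, f d (r / d) = ∑ d ∈ r.unitaryDivisors, f (r / d) d := by
  have hinv : ∀ d ∈ r.unitaryDivisors, r / (r / d) = d := fun d hd =>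
    Nat.div_div_self (mem_unitaryDivisors.1 hd).1.1 (mem_unitaryDivisors.1 hd).1.2
  exact sum_nbij' (r / ·) (r / ·) (fun _ => div_mem_unitaryDivisors)
    (fun _ => div_mem_unitaryDivisors) hinv hinv fun d hd => by rw [hinv d hd]

lemma factorization_eq_of_mem_unitaryDivisors (hd : d ∈ r.unitaryDivisors) {p : ℕ}
    (hp : p ∈ d.primeFactors) : d.factorization p = r.factorization p := by
  obtain ⟨⟨hdr, -⟩, hcop⟩ := mem_unitaryDivisors.1 hd
  rw [← factorization_eq_of_coprime_left hcop (mem_primeFactors_iff_mem_primeFactorsList.1 hp),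
    Nat.mul_div_cancel' hdr]

lemma prod_ordProj_primeFactors_of_mem_unitaryDivisors (hd : d ∈ r.unitaryDivisors) :
    ∏ p ∈ d.primeFactors, ordProj[p] r = d := by
  conv_rhs => rw [prod_primeFactors_pow_factorization (pos_of_mem_unitaryDivisors hd).ne']
  exact prod_congr rfl fun p hp => by rw [factorization_eq_of_mem_unitaryDivisors hd hp]

lemma primeFactors_subset_of_mem_unitaryDivisors (hd : d ∈ r.unitaryDivisors) (hdk : d ∣ k) :
    d.primeFactors ⊆ {p ∈ r.primeFactors | ordProj[p] r ∣ k} := by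
  obtain ⟨⟨hdr, hr⟩, -⟩ := mem_unitaryDivisors.1 hd
  intro p hp
  refine mem_filter.2 ⟨primeFactors_mono hdr hr hp, ?_⟩
  rw [← factorization_eq_of_mem_unitaryDivisors hd hp]
  exact (ordProj_dvd d p).trans hdk

section PrimePowerProduct

variable {S : Finset ℕ}

lemma factorization_prod_ordProj (hS : S ⊆ r.primeFactors) (q : ℕ) :
    (∏ p ∈ S, ordProj[p] r).factorization q = if q ∈ S then r.factorization q else 0 := by
  rw [factorization_prod fun p _ => (ordProj_pos r p).ne', Finsupp.finsetSum_apply,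
    ← sum_ite_eq' S q (fun q => r.factorization q)]
  refine sum_congr rfl fun p hp => ?_
  rw [(prime_of_mem_primeFactors (hS hp)).factorization_pow, Finsupp.single_apply]

lemma primeFactors_prod_ordProj (hS : S ⊆ r.primeFactors) :
    (∏ p ∈ S, ordProj[p] r).primeFactors = S := by
  ext q
  rw [← support_factorization, Finsupp.mem_support_iff, factorization_prod_ordProj hS]
  by_cases hq : q ∈ S
  · rw [if_pos hq, ← Finsupp.mem_support_iff, support_factorization]
    exact iff_of_true (hS hq) hq
  · simp [hq]

lemma prod_ordProj_dvd (hS : S ⊆ r.primeFactors) {m : ℕ} (hm : ∀ p ∈ S, ordProj[p] r ∣ m) :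
    ∏ p ∈ S, ordProj[p] r ∣ m := by
  rcases eq_or_ne m 0 with rfl | hm0
  · exact dvd_zero _
  rw [← factorization_le_iff_dvd (prod_ne_zero_iff.2 fun p _ => (ordProj_pos r p).ne') hm0]
  intro q
  rw [factorization_prod_ordProj hS]
  split_ifs with hq
  · exact ((prime_of_mem_primeFactors (hS hq)).pow_dvd_iff_le_factorization hm0).1 (hm q hq)
  · exact zero_le _

lemma prod_ordProj_mem_unitaryDivisors (hS : S ⊆ r.primeFactors) (hr : r ≠ 0) :
    ∏ p ∈ S, ordProj[p] r ∈ r.unitaryDivisors := by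
  set D := ∏ p ∈ S, ordProj[p] r
  have hD0 : D ≠ 0 := prod_ne_zero_iff.2 fun p _ => (ordProj_pos r p).ne'
  have hDr : D ∣ r := prod_ordProj_dvd hS fun p _ => ordProj_dvd r p
  refine mem_unitaryDivisors.2 ⟨⟨hDr, hr⟩, ?_⟩
  rw [← disjoint_primeFactors hD0 (div_ne_zero_iff_of_dvd hDr |>.2 ⟨hr, hD0⟩),
    primeFactors_prod_ordProj hS, disjoint_left]
  intro q hq hq'
  rw [← support_factorization, Finsupp.mem_support_iff, factorization_div hDr,
    Finsupp.tsub_apply, factorization_prod_ordProj hS, if_pos hq, tsub_self] at hq'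
  exact hq' rfl

end PrimePowerProduct

lemma sum_filter_dvd_unitaryDivisors_neg_one_pow (k : ℕ) (hr : r ≠ 0) :
    ∑ d ∈ r.unitaryDivisors with d ∣ k, (-1 : ℤ) ^ #d.primeFactors
      = if {p ∈ r.primeFactors | ordProj[p] r ∣ k} = ∅ then 1 else 0 := by
  rw [← sum_powerset_neg_one_pow_card]
  refine sum_nbij' primeFactors (fun S => ∏ p ∈ S, ordProj[p] r) ?_ ?_ ?_ ?_ fun _ _ => rfl
  · intro d hd
    have hd := mem_filter.1 hd
    exact mem_powerset.2 (primeFactors_subset_of_mem_unitaryDivisors hd.1 hd.2)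
  · intro S hS
    have hST := mem_powerset.1 hS
    have hSr : S ⊆ r.primeFactors := hST.trans (filter_subset _ _)
    exact mem_filter.2 ⟨prod_ordProj_mem_unitaryDivisors hSr hr,
      prod_ordProj_dvd hSr fun p hp => (mem_filter.1 (hST hp)).2⟩
  · exact fun d hd => prod_ordProj_primeFactors_of_mem_unitaryDivisors (mem_filter.1 hd).1
  · exact fun S hS => primeFactors_prod_ordProj ((mem_powerset.1 hS).trans (filter_subset _ _))

end Nat

open Nat

lemma unitaryGcd_eq_sup (k r : ℕ) : unitaryGcd k r = {d ∈ r.unitaryDivisors | d ∣ k}.sup id := by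
  rw [unitaryGcd, filter_dvd_unitaryDivisors]

lemma unitaryGcd_eq_one_iff {k r : ℕ} (hr : r ≠ 0) :
    unitaryGcd k r = 1 ↔ {p ∈ r.primeFactors | ordProj[p] r ∣ k} = ∅ := by
  rw [unitaryGcd_eq_sup]
  constructor
  · intro h
    by_contra hne
    obtain ⟨p, hp⟩ := nonempty_of_ne_empty hne
    obtain ⟨hpr, hpk⟩ := mem_filter.1 hp
    have hmem : ordProj[p] r ∈ {d ∈ r.unitaryDivisors | d ∣ k} := by
      have h := prod_ordProj_mem_unitaryDivisors (singleton_subset_iff.2 hpr) hr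
      rw [prod_singleton] at h
      exact mem_filter.2 ⟨h, hpk⟩
    have hle : ordProj[p] r ≤ 1 := h ▸ le_sup (f := id) hmem
    have hv : r.factorization p ≠ 0 := Finsupp.mem_support_iff.1 (support_factorization r ▸ hpr)
    exact (Nat.one_lt_pow hv (prime_of_mem_primeFactors hpr).one_lt).not_ge hle
  · intro h
    have hone : ∀ d ∈ {d ∈ r.unitaryDivisors | d ∣ k}, d = 1 := by
      intro d hd
      obtain ⟨hdU, hdk⟩ := mem_filter.1 hd
      have hsub := primeFactors_subset_of_mem_unitaryDivisors hdU hdk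
      rw [h, subset_empty, primeFactors_eq_empty] at hsub
      exact hsub.resolve_left (pos_of_mem_unitaryDivisors hdU).ne'
    have h1 : 1 ∈ {d ∈ r.unitaryDivisors | d ∣ k} :=
      mem_filter.2 ⟨mem_unitaryDivisors.2 ⟨⟨one_dvd r, hr⟩, coprime_one_left _⟩, one_dvd k⟩
    exact le_antisymm (Finset.sup_le fun d hd => (hone d hd).le) (le_sup (f := id) h1)

lemma sum_filter_dvd_unitaryDivisors_neg_one_pow_eq_ite_unitaryGcd (k r : ℕ) :
    ∑ d ∈ r.unitaryDivisors with d ∣ k, (-1 : ℤ) ^ #d.primeFactors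
      = if unitaryGcd k r = 1 then 1 else 0 := by
  rcases eq_or_ne r 0 with rfl | hr
  · simp [unitaryDivisors, unitaryGcd]
  rw [sum_filter_dvd_unitaryDivisors_neg_one_pow k hr]
  exact if_congr (unitaryGcd_eq_one_iff hr).symm rfl rfl

lemma unitaryRamanujanSum_eq_sum_unitaryDivisors (n r : ℕ) :
    unitaryRamanujanSum n r
      = ∑ d ∈ r.unitaryDivisors with d ∣ n, (d : ℂ) * (-1) ^ #(r / d).primeFactors := by
  set e : ℕ → ℂ := fun k => Complex.exp (2 * Real.pi * Complex.I * k * n / r)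
  calc unitaryRamanujanSum n r
      = ∑ k ∈ Icc 1 r, ∑ d ∈ r.unitaryDivisors,
          if d ∣ k then (-1 : ℂ) ^ #d.primeFactors * e k else 0 := by
        rw [unitaryRamanujanSum, sum_filter]
        refine sum_congr rfl fun k _ => ?_
        have h := congrArg (Int.cast : ℤ → ℂ)
          (sum_filter_dvd_unitaryDivisors_neg_one_pow_eq_ite_unitaryGcd k r)
        push_cast at h
        rw [← sum_filter, ← sum_mul, h, ite_mul, one_mul, zero_mul]
    _ = ∑ d ∈ r.unitaryDivisors, (-1 : ℂ) ^ #d.primeFactors * ∑ k ∈ Icc 1 r with d ∣ k, e k := by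
        rw [sum_comm]
        simp only [mul_sum, sum_filter, mul_ite, mul_zero]
    _ = ∑ d ∈ r.unitaryDivisors,
          (-1 : ℂ) ^ #d.primeFactors * if r / d ∣ n then ((r / d : ℕ) : ℂ) else 0 := by
        refine sum_congr rfl fun d hd => ?_
        obtain ⟨⟨hdr, hr⟩, -⟩ := mem_unitaryDivisors.1 hd
        rw [sum_filter_dvd_Icc_exp n hdr hr]
    _ = ∑ d ∈ r.unitaryDivisors with d ∣ n, (d : ℂ) * (-1) ^ #(r / d).primeFactors := by
        rw [sum_filter]
        refine (sum_congr rfl fun d _ => ?_).trans (sum_unitaryDivisors_div_comm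
          fun a b => if b ∣ n then (b : ℂ) * (-1) ^ #a.primeFactors else 0)
        rw [mul_ite, mul_zero, mul_comm]

theorem unitaryRamanujanSum_eq_sum_general (n r : ℕ) :
    unitaryRamanujanSum n r =
      ∑ d ∈ r.divisors.filter (fun d => d ∣ n ∧ Nat.Coprime d (r / d)),
        (d : ℂ) * (-1) ^ (r / d).primeFactors.card ∧
    ∃ m : ℤ, unitaryRamanujanSum n r = (m : ℂ) := by
  rw [← filter_dvd_unitaryDivisors, unitaryRamanujanSum_eq_sum_unitaryDivisors]
  exact ⟨rfl, ∑ d ∈ r.unitaryDivisors with d ∣ n, (d : ℤ) * (-1) ^ #(r / d).primeFactors,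
    by push_cast; rfl⟩

/-- `c*(n,r) = ∑_{d ∣ n, d ∣ r, gcd(d, r/d) = 1} d·(−1)^{ω(r/d)}`; in particular
`c*(n,r)` is an integer. -/
theorem unitaryRamanujanSum_eq_sum (n r : ℕ) (hn : 0 < n) (hr : 0 < r) :
    unitaryRamanujanSum n r =
      ∑ d ∈ r.divisors.filter (fun d => d ∣ n ∧ Nat.Coprime d (r / d)),
        (d : ℂ) * (-1) ^ (r / d).primeFactors.card ∧
    ∃ m : ℤ, unitaryRamanujanSum n r = (m : ℂ) :=
  unitaryRamanujanSum_eq_sum_general n r
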